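/- arXiv:1212.6345 — 4 statements merged into one kernel-verified Lean document; each statement's English description precedes it below -/
import Mathlib

section
/- Let R be a commutative ring with identity, M and N modules over R, and Ω ⊆ M_nc a nc set. A mapping f : Ω → N_nc with f(Ω_n) ⊆ N^{n×n} for every n ≥ 1 respects direct sums and respects similarities (i.e., is a nc function) if and only if it respects intertwining: for all n, m ≥ 1, X ∈ Ω_n, Y ∈ Ω_m, and T ∈ R^{n×m}, the equality X T = T Y implies f(X) T = T f(Y). -/
open Matrix

/-- Product of a scalar matrix with a matrix over a module. -/
def scalMul {R : Type*} [CommRing R] {M : Type*} [AddCommGroup M] [Module R M]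
    {p n m : ℕ} (S : Matrix (Fin p) (Fin n) R) (X : Matrix (Fin n) (Fin m) M) :
    Matrix (Fin p) (Fin m) M :=
  Matrix.of fun i j => ∑ k, S i k • X k j

/-- Product of a matrix over a module with a scalar matrix. -/
def mulScal {R : Type*} [CommRing R] {M : Type*} [AddCommGroup M] [Module R M]
    {n m q : ℕ} (X : Matrix (Fin n) (Fin m) M) (T : Matrix (Fin m) (Fin q) R) :
    Matrix (Fin n) (Fin q) M :=
  Matrix.of fun i j => ∑ k, T k j • X i k

/-- Direct sum of two square matrices over a module. -/
def dSum {M : Type*} [AddCommGroup M] {n m : ℕ}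
    (X : Matrix (Fin n) (Fin n) M) (Y : Matrix (Fin m) (Fin m) M) :
    Matrix (Fin (n + m)) (Fin (n + m)) M :=
  (Matrix.reindex finSumFinEquiv finSumFinEquiv) (Matrix.fromBlocks X 0 0 Y)

/-- Block upper triangular 2×2 block matrix `[[X, Z],[0, Y]]`. -/
def upTri {M : Type*} [AddCommGroup M] {n m : ℕ}
    (X : Matrix (Fin n) (Fin n) M) (Z : Matrix (Fin n) (Fin m) M)
    (Y : Matrix (Fin m) (Fin m) M) :
    Matrix (Fin (n + m)) (Fin (n + m)) M :=
  (Matrix.reindex finSumFinEquiv finSumFinEquiv) (Matrix.fromBlocks X Z 0 Y)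

section NCHelp

variable {R : Type*} [CommRing R] {M : Type*} [AddCommGroup M] [Module R M]
  {N : Type*} [AddCommGroup N] [Module R N]

def sMul {p n m : Type*} [Fintype n] (S : Matrix p n R) (X : Matrix n m M) : Matrix p m M :=
  Matrix.of fun i j => ∑ k, S i k • X k j

def mScal {n m q : Type*} [Fintype m] (X : Matrix n m M) (T : Matrix m q R) : Matrix n q M :=
  Matrix.of fun i j => ∑ k, T k j • X i k

lemma scalMul_eq {p n m : ℕ} (S : Matrix (Fin p) (Fin n) R) (X : Matrix (Fin n) (Fin m) M) :
    scalMul S X = sMul S X := rfl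

lemma mulScal_eq {n m q : ℕ} (X : Matrix (Fin n) (Fin m) M) (T : Matrix (Fin m) (Fin q) R) :
    mulScal X T = mScal X T := rfl

lemma dSum_eq {n m : ℕ} (X : Matrix (Fin n) (Fin n) M) (Y : Matrix (Fin m) (Fin m) M) :
    dSum X Y = (Matrix.fromBlocks X 0 0 Y).submatrix
      (finSumFinEquiv.symm : Fin (n + m) → Fin n ⊕ Fin m)
      (finSumFinEquiv.symm : Fin (n + m) → Fin n ⊕ Fin m) := rfl

lemma sMul_apply {p n m : Type*} [Fintype n] (S : Matrix p n R) (X : Matrix n m M) (i j) :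
    sMul S X i j = ∑ k, S i k • X k j := rfl

lemma mScal_apply {n m q : Type*} [Fintype m] (X : Matrix n m M) (T : Matrix m q R) (i j) :
    mScal X T i j = ∑ k, T k j • X i k := rfl

lemma sMul_submatrix {p n m p' n' m' : Type*} [Fintype n] [Fintype n']
    (S : Matrix p n R) (X : Matrix n m M) (ep : p' → p) (en : n' ≃ n) (em : m' → m) :
    sMul (S.submatrix ep en) (X.submatrix (en : n' → n) em) = (sMul S X).submatrix ep em := by
  ext i j
  exact en.sum_comp (fun k => S (ep i) k • X k (em j))

lemma mScal_submatrix {n m q n' m' q' : Type*} [Fintype m] [Fintype m']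
    (X : Matrix n m M) (T : Matrix m q R) (en : n' → n) (em : m' ≃ m) (eq' : q' → q) :
    mScal (X.submatrix en (em : m' → m)) (T.submatrix (em : m' → m) eq') =
      (mScal X T).submatrix en eq' := by
  ext i j
  exact em.sum_comp (fun k => T k (eq' j) • X (en i) k)

lemma mScal_submatrix_right {n m q q' : Type*} [Fintype m]
    (X : Matrix n m M) (T : Matrix m q R) (eq' : q' → q) :
    mScal X (T.submatrix id eq') = (mScal X T).submatrix id eq' := rfl

lemma sMul_fromBlocks {p₁ p₂ n₁ n₂ m₁ m₂ : Type*} [Fintype n₁] [Fintype n₂]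
    (A : Matrix p₁ n₁ R) (B : Matrix p₁ n₂ R) (C : Matrix p₂ n₁ R) (D : Matrix p₂ n₂ R)
    (X : Matrix n₁ m₁ M) (Z : Matrix n₁ m₂ M) (W : Matrix n₂ m₁ M) (Y : Matrix n₂ m₂ M) :
    sMul (fromBlocks A B C D) (fromBlocks X Z W Y) =
      fromBlocks (sMul A X + sMul B W) (sMul A Z + sMul B Y)
        (sMul C X + sMul D W) (sMul C Z + sMul D Y) := by
  ext i j
  rcases i with i | i <;> rcases j with j | j <;>
    simp [sMul, fromBlocks, Fintype.sum_sum_type, Matrix.add_apply]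

lemma mScal_fromBlocks {n₁ n₂ m₁ m₂ q₁ q₂ : Type*} [Fintype m₁] [Fintype m₂]
    (X : Matrix n₁ m₁ M) (Z : Matrix n₁ m₂ M) (W : Matrix n₂ m₁ M) (Y : Matrix n₂ m₂ M)
    (A : Matrix m₁ q₁ R) (B : Matrix m₁ q₂ R) (C : Matrix m₂ q₁ R) (D : Matrix m₂ q₂ R) :
    mScal (fromBlocks X Z W Y) (fromBlocks A B C D) =
      fromBlocks (mScal X A + mScal Z C) (mScal X B + mScal Z D)
        (mScal W A + mScal Y C) (mScal W B + mScal Y D) := by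
  ext i j
  rcases i with i | i <;> rcases j with j | j <;>
    simp [mScal, fromBlocks, Fintype.sum_sum_type, Matrix.add_apply]

lemma sMul_one {n m : Type*} [Fintype n] [DecidableEq n] (X : Matrix n m M) :
    sMul (1 : Matrix n n R) X = X := by
  ext i j
  simp [sMul, Matrix.one_apply, ite_smul]

lemma mScal_one {n m : Type*} [Fintype m] [DecidableEq m] (X : Matrix n m M) :
    mScal X (1 : Matrix m m R) = X := by
  ext i j
  simp [mScal, Matrix.one_apply, ite_smul]

lemma sMul_zero {p n m : Type*} [Fintype n] (S : Matrix p n R) :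
    sMul S (0 : Matrix n m M) = 0 := by
  ext i j; simp [sMul]

lemma zero_sMul {p n m : Type*} [Fintype n] (X : Matrix n m M) :
    sMul (0 : Matrix p n R) X = 0 := by
  ext i j; simp [sMul]

lemma mScal_zero {n m q : Type*} [Fintype m] (X : Matrix n m M) :
    mScal X (0 : Matrix m q R) = 0 := by
  ext i j; simp [mScal]

lemma zero_mScal {n m q : Type*} [Fintype m] (T : Matrix m q R) :
    mScal (0 : Matrix n m M) T = 0 := by
  ext i j; simp [mScal]

lemma mScal_neg {n m q : Type*} [Fintype m] (X : Matrix n m M) (T : Matrix m q R) :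
    mScal X (-T) = -(mScal X T) := by
  ext i j; simp [mScal]

lemma mScal_mScal {n m q r : Type*} [Fintype m] [Fintype q]
    (X : Matrix n m M) (T : Matrix m q R) (S : Matrix q r R) :
    mScal (mScal X T) S = mScal X (T * S) := by
  ext i j
  simp only [mScal_apply, Matrix.mul_apply, Finset.smul_sum, Finset.sum_smul, smul_smul]
  rw [Finset.sum_comm]
  refine Finset.sum_congr rfl fun l _ => Finset.sum_congr rfl fun k _ => ?_
  rw [mul_comm]

lemma sMul_mScal {p n m q : Type*} [Fintype n] [Fintype m]
    (S : Matrix p n R) (X : Matrix n m M) (T : Matrix m q R) :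
    sMul S (mScal X T) = mScal (sMul S X) T := by
  ext i j
  simp only [sMul_apply, mScal_apply, Finset.smul_sum, smul_smul]
  rw [Finset.sum_comm]
  refine Finset.sum_congr rfl fun l _ => Finset.sum_congr rfl fun k _ => ?_
  rw [mul_comm]

/-- The `[1 0]` block row matrix. -/
def inlMat (R : Type*) [CommRing R] (n m : Type*) [DecidableEq n] : Matrix n (n ⊕ m) R :=
  Matrix.of fun i => Sum.elim (fun a => if i = a then 1 else 0) 0

/-- The `[0 1]` block row matrix. -/
def inrMat (R : Type*) [CommRing R] (n m : Type*) [DecidableEq m] : Matrix m (n ⊕ m) R :=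
  Matrix.of fun i => Sum.elim 0 (fun b => if i = b then 1 else 0)

lemma sMul_inlMat {n m q : Type*} [Fintype n] [Fintype m] [DecidableEq n]
    (G : Matrix (n ⊕ m) q N) :
    sMul (inlMat R n m) G = Matrix.of fun i j => G (Sum.inl i) j := by
  ext i j
  simp [sMul, inlMat, Fintype.sum_sum_type, ite_smul]

lemma sMul_inrMat {n m q : Type*} [Fintype n] [Fintype m] [DecidableEq m]
    (G : Matrix (n ⊕ m) q N) :
    sMul (inrMat R n m) G = Matrix.of fun i j => G (Sum.inr i) j := by
  ext i j
  simp [sMul, inrMat, Fintype.sum_sum_type, ite_smul]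

lemma mScal_inlMat {p n m : Type*} [Fintype n] [DecidableEq n] (X : Matrix p n M) :
    mScal X (inlMat R n m) = Matrix.of fun i => Sum.elim (fun a => X i a) 0 := by
  ext i j
  rcases j with j | j <;> simp [mScal, inlMat, ite_smul]

lemma mScal_inrMat {p n m : Type*} [Fintype m] [DecidableEq m] (X : Matrix p m M) :
    mScal X (inrMat R n m) = Matrix.of fun i => Sum.elim 0 (fun b => X i b) := by
  ext i j
  rcases j with j | j <;> simp [mScal, inrMat, ite_smul]

lemma submatrix_equiv_inj {n m n' m' : Type*} (e : n ≃ n') (e' : m ≃ m')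
    {A B : Matrix n' m' N} (h : A.submatrix e e' = B.submatrix e e') : A = B := by
  have := congrArg (fun C : Matrix n m N => C.submatrix e.symm e'.symm) h
  simpa [Matrix.submatrix_submatrix, Function.comp] using this

lemma submatrix_id_equiv_inj {q n m : Type*} (e : n ≃ m) {A B : Matrix q m N}
    (h : A.submatrix id (e : n → m) = B.submatrix id (e : n → m)) : A = B := by
  ext i j
  have := congrFun (congrFun h i) (e.symm j)
  simpa using this

lemma tri_conj {n m : ℕ} (T : Matrix (Fin n) (Fin m) R)
    (P : Matrix (Fin n) (Fin n) M) (Q : Matrix (Fin m) (Fin m) M) :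
    scalMul ((fromBlocks 1 T 0 1).submatrix
        (finSumFinEquiv.symm : Fin (n + m) → Fin n ⊕ Fin m) finSumFinEquiv.symm)
      (mulScal (dSum P Q)
        ((fromBlocks 1 (-T) 0 1).submatrix
          (finSumFinEquiv.symm : Fin (n + m) → Fin n ⊕ Fin m) finSumFinEquiv.symm)) =
      (fromBlocks P (sMul T Q - mScal P T) 0 Q).submatrix
        (finSumFinEquiv.symm : Fin (n + m) → Fin n ⊕ Fin m) finSumFinEquiv.symm := by
  rw [scalMul_eq, mulScal_eq, dSum_eq,
    mScal_submatrix _ _ _ finSumFinEquiv.symm _, sMul_submatrix _ _ _ finSumFinEquiv.symm _,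
    mScal_fromBlocks, sMul_fromBlocks]
  congr 1
  simp [mScal_one, sMul_one, mScal_zero, zero_mScal, sMul_zero, zero_sMul, mScal_neg,
    sub_eq_add_neg, add_comm]

end NCHelp

/-- A noncommutative (nc) set: closed under direct sums. -/
def IsNCSet {M : Type*} [AddCommGroup M]
    (Ω : ∀ n : ℕ, Set (Matrix (Fin n) (Fin n) M)) : Prop :=
  ∀ (n m : ℕ) (X : Matrix (Fin n) (Fin n) M) (Y : Matrix (Fin m) (Fin m) M),
    X ∈ Ω n → Y ∈ Ω m → dSum X Y ∈ Ω (n + m)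

/-- `f` respects direct sums on `Ω`. -/
def RespectsDirSums {M N : Type*} [AddCommGroup M] [AddCommGroup N]
    (Ω : ∀ n : ℕ, Set (Matrix (Fin n) (Fin n) M))
    (f : ∀ n : ℕ, Matrix (Fin n) (Fin n) M → Matrix (Fin n) (Fin n) N) : Prop :=
  ∀ (n m : ℕ) (X : Matrix (Fin n) (Fin n) M) (Y : Matrix (Fin m) (Fin m) M),
    X ∈ Ω n → Y ∈ Ω m → f (n + m) (dSum X Y) = dSum (f n X) (f m Y)

/-- `f` respects similarities on `Ω`. -/
def RespectsSim (R : Type*) [CommRing R] {M N : Type*} [AddCommGroup M] [Module R M]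
    [AddCommGroup N] [Module R N]
    (Ω : ∀ n : ℕ, Set (Matrix (Fin n) (Fin n) M))
    (f : ∀ n : ℕ, Matrix (Fin n) (Fin n) M → Matrix (Fin n) (Fin n) N) : Prop :=
  ∀ (n : ℕ) (X : Matrix (Fin n) (Fin n) M) (S T : Matrix (Fin n) (Fin n) R),
    X ∈ Ω n → S * T = 1 → T * S = 1 → scalMul S (mulScal X T) ∈ Ω n →
    f n (scalMul S (mulScal X T)) = scalMul S (mulScal (f n X) T)

/-- `f` respects intertwining on `Ω`: `X T = T Y` implies `f(X) T = T f(Y)`. -/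
def RespectsIntertwining (R : Type*) [CommRing R] {M N : Type*} [AddCommGroup M]
    [Module R M] [AddCommGroup N] [Module R N]
    (Ω : ∀ n : ℕ, Set (Matrix (Fin n) (Fin n) M))
    (f : ∀ n : ℕ, Matrix (Fin n) (Fin n) M → Matrix (Fin n) (Fin n) N) : Prop :=
  ∀ (n m : ℕ) (X : Matrix (Fin n) (Fin n) M) (Y : Matrix (Fin m) (Fin m) M)
    (T : Matrix (Fin n) (Fin m) R),
    X ∈ Ω n → Y ∈ Ω m → mulScal X T = scalMul T Y →
    mulScal (f n X) T = scalMul T (f m Y)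

/-- A mapping on a nc set respects direct sums and similarities
(i.e., is a nc function) if and only if it respects intertwining. -/
theorem nc_function_iff_respects_intertwining
    {R : Type*} [CommRing R] {M : Type*} [AddCommGroup M] [Module R M]
    {N : Type*} [AddCommGroup N] [Module R N]
    (Ω : ∀ n : ℕ, Set (Matrix (Fin n) (Fin n) M))
    (f : ∀ n : ℕ, Matrix (Fin n) (Fin n) M → Matrix (Fin n) (Fin n) N)
    (hΩ : IsNCSet Ω) :
    (RespectsDirSums Ω f ∧ RespectsSim R Ω f) ↔ RespectsIntertwining R Ω f := by
  constructor
  · rintro ⟨hds, hsim⟩ n m X Y T hX hY hXT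
    rw [mulScal_eq, scalMul_eq] at hXT
    set e := (finSumFinEquiv : Fin n ⊕ Fin m ≃ Fin (n + m)) with he
    have hW : dSum X Y ∈ Ω (n + m) := hΩ n m X Y hX hY
    set S : Matrix (Fin (n + m)) (Fin (n + m)) R :=
      (fromBlocks 1 T 0 1).submatrix (e.symm : Fin (n + m) → Fin n ⊕ Fin m) e.symm with hS
    set S' : Matrix (Fin (n + m)) (Fin (n + m)) R :=
      (fromBlocks 1 (-T) 0 1).submatrix (e.symm : Fin (n + m) → Fin n ⊕ Fin m) e.symm with hS'
    have hSS' : S * S' = 1 := by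
      rw [hS, hS', Matrix.submatrix_mul_equiv, Matrix.fromBlocks_multiply]
      simp [Matrix.submatrix_one_equiv]
    have hS'S : S' * S = 1 := by
      rw [hS, hS', Matrix.submatrix_mul_equiv, Matrix.fromBlocks_multiply]
      simp [Matrix.submatrix_one_equiv]
    have keyX : scalMul S (mulScal (dSum X Y) S') = dSum X Y := by
      rw [hS, hS', tri_conj T X Y, dSum_eq, hXT]
      simp
    have hmem : scalMul S (mulScal (dSum X Y) S') ∈ Ω (n + m) := by rw [keyX]; exact hW
    have hsim' := hsim (n + m) (dSum X Y) S S' hW hSS' hS'S hmem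
    rw [keyX, hds n m X Y hX hY, hS, hS', tri_conj T (f n X) (f m Y), dSum_eq] at hsim'
    have := submatrix_equiv_inj e.symm e.symm hsim'
    have h12 : (0 : Matrix (Fin n) (Fin m) N) =
        sMul T (f m Y) - mScal (f n X) T := by
      simpa using congrArg Matrix.toBlocks₁₂ this
    rw [mulScal_eq, scalMul_eq]
    exact (sub_eq_zero.mp h12.symm).symm
  · intro hint
    constructor
    · intro n m X Y hX hY
      have hW : dSum X Y ∈ Ω (n + m) := hΩ n m X Y hX hY
      set T1 : Matrix (Fin n) (Fin (n + m)) R :=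
        (inlMat R (Fin n) (Fin m)).submatrix id (finSumFinEquiv.symm : Fin (n + m) → Fin n ⊕ Fin m) with hT1
      set T2 : Matrix (Fin m) (Fin (n + m)) R :=
        (inrMat R (Fin n) (Fin m)).submatrix id (finSumFinEquiv.symm : Fin (n + m) → Fin n ⊕ Fin m) with hT2
      have hb1 : mScal X (inlMat R (Fin n) (Fin m)) =
          sMul (inlMat R (Fin n) (Fin m)) (fromBlocks X 0 0 Y) := by
        rw [mScal_inlMat, sMul_inlMat]
        ext i j
        rcases j with j | j <;> simp
      have hb2 : mScal Y (inrMat R (Fin n) (Fin m)) =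
          sMul (inrMat R (Fin n) (Fin m)) (fromBlocks X 0 0 Y) := by
        rw [mScal_inrMat, sMul_inrMat]
        ext i j
        rcases j with j | j <;> simp
      have cond1 : mulScal X T1 = scalMul T1 (dSum X Y) := by
        simp only [mulScal_eq, scalMul_eq]
        rw [dSum_eq, hT1, sMul_submatrix _ _ id finSumFinEquiv.symm _, mScal_submatrix_right, hb1]
      have cond2 : mulScal Y T2 = scalMul T2 (dSum X Y) := by
        simp only [mulScal_eq, scalMul_eq]
        rw [dSum_eq, hT2, sMul_submatrix _ _ id finSumFinEquiv.symm _, mScal_submatrix_right, hb2]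
      have hint1 := hint n (n + m) X (dSum X Y) T1 hX hW cond1
      have hint2 := hint m (n + m) Y (dSum X Y) T2 hY hW cond2
      set G : Matrix (Fin n ⊕ Fin m) (Fin n ⊕ Fin m) N :=
        (f (n + m) (dSum X Y)).submatrix (finSumFinEquiv : Fin n ⊕ Fin m → Fin (n + m))
          (finSumFinEquiv : Fin n ⊕ Fin m → Fin (n + m)) with hGdef
      have hG : f (n + m) (dSum X Y) =
          G.submatrix (finSumFinEquiv.symm : Fin (n + m) → Fin n ⊕ Fin m) finSumFinEquiv.symm := by
        rw [hGdef]
        ext i j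
        simp
      simp only [mulScal_eq, scalMul_eq] at hint1 hint2
      rw [hG, hT1, sMul_submatrix _ _ id finSumFinEquiv.symm _, mScal_submatrix_right] at hint1
      rw [hG, hT2, sMul_submatrix _ _ id finSumFinEquiv.symm _, mScal_submatrix_right] at hint2
      have E1 := submatrix_id_equiv_inj finSumFinEquiv.symm hint1
      have E2 := submatrix_id_equiv_inj finSumFinEquiv.symm hint2
      rw [mScal_inlMat, sMul_inlMat] at E1
      rw [mScal_inrMat, sMul_inrMat] at E2
      rw [hG, dSum_eq]
      suffices hGB : G = fromBlocks (f n X) 0 0 (f m Y) by rw [hGB]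
      ext i j
      rcases i with i | i <;> rcases j with j | j
      · simpa using (congrFun (congrFun E1 i) (Sum.inl j)).symm
      · simpa using (congrFun (congrFun E1 i) (Sum.inr j)).symm
      · simpa using (congrFun (congrFun E2 i) (Sum.inl j)).symm
      · simpa using (congrFun (congrFun E2 i) (Sum.inr j)).symm
    · intro n X S T hX hST hTS hmem
      have h1 : mulScal (scalMul S (mulScal X T)) S = scalMul S X := by
        simp only [mulScal_eq, scalMul_eq]
        rw [sMul_mScal, mScal_mScal, hTS, mScal_one]
      have h2 := hint n n (scalMul S (mulScal X T)) X S hmem hX h1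
      simp only [mulScal_eq, scalMul_eq] at h2 ⊢
      conv_rhs => rw [sMul_mScal]
      rw [← h2, mScal_mScal, hST, mScal_one]
end

section
/- Let f be a nc function on a nc set Ω ⊆ M_nc. Suppose X ∈ Ω_n, Y ∈ Ω_m and Z ∈ M^{n×m} are such that the block matrix [[X, Z],[0, Y]] belongs to Ω_{n+m}. Then f([[X, Z],[0, Y]]) is block upper triangular with (1,1) block f(X), (2,2) block f(Y) and (2,1) block 0; denote its (1,2) block by Δ(Z) ∈ N^{n×m}. Moreover, if r ∈ R is such that [[X, rZ],[0, Y]] also belongs to Ω_{n+m}, then the (1,2) block of f([[X, rZ],[0, Y]]) equals r·Δ(Z). -/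
open Matrix

/-- The (1,1) block of an `(n+m)×(n+m)` matrix. -/
def blk11 {N : Type*} {n m : ℕ} (W : Matrix (Fin (n + m)) (Fin (n + m)) N) :
    Matrix (Fin n) (Fin n) N :=
  Matrix.toBlocks₁₁ ((Matrix.reindex finSumFinEquiv.symm finSumFinEquiv.symm) W)

/-- The (1,2) block of an `(n+m)×(n+m)` matrix. -/
def blk12 {N : Type*} {n m : ℕ} (W : Matrix (Fin (n + m)) (Fin (n + m)) N) :
    Matrix (Fin n) (Fin m) N :=
  Matrix.toBlocks₁₂ ((Matrix.reindex finSumFinEquiv.symm finSumFinEquiv.symm) W)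

/-- The (2,1) block of an `(n+m)×(n+m)` matrix. -/
def blk21 {N : Type*} {n m : ℕ} (W : Matrix (Fin (n + m)) (Fin (n + m)) N) :
    Matrix (Fin m) (Fin n) N :=
  Matrix.toBlocks₂₁ ((Matrix.reindex finSumFinEquiv.symm finSumFinEquiv.symm) W)

/-- The (2,2) block of an `(n+m)×(n+m)` matrix. -/
def blk22 {N : Type*} {n m : ℕ} (W : Matrix (Fin (n + m)) (Fin (n + m)) N) :
    Matrix (Fin m) (Fin m) N :=
  Matrix.toBlocks₂₂ ((Matrix.reindex finSumFinEquiv.symm finSumFinEquiv.symm) W)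

/-! Similarity invariance and direct sums give intertwining: if `X T = T Y` then
conjugating `X ⊕ Y` by the shear `[[1, T], [0, 1]]` fixes it, and comparing the images under `f`
yields `f(X) T = T f(Y)`. The theorem then follows by intertwining `[[X, Z], [0, Y]]` with
`X ⊕ Y` through `diag(1, 0)` and `diag(0, 1)`, and `[[X, r Z], [0, Y]]` with `[[X, Z], [0, Y]]`
through `diag(r, 1)`. -/

section BlockMatrix

variable {α : Type*} {n m n' m' : ℕ}

def blockMat (A : Matrix (Fin n) (Fin n') α) (B : Matrix (Fin n) (Fin m') α)
    (C : Matrix (Fin m) (Fin n') α) (D : Matrix (Fin m) (Fin m') α) :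
    Matrix (Fin (n + m)) (Fin (n' + m')) α :=
  reindex finSumFinEquiv finSumFinEquiv (fromBlocks A B C D)

theorem blockMat_inj {A A' : Matrix (Fin n) (Fin n') α} {B B' : Matrix (Fin n) (Fin m') α}
    {C C' : Matrix (Fin m) (Fin n') α} {D D' : Matrix (Fin m) (Fin m') α} :
    blockMat A B C D = blockMat A' B' C' D' ↔ A = A' ∧ B = B' ∧ C = C' ∧ D = D' := by
  rw [blockMat, blockMat, (reindex _ _).injective.eq_iff, fromBlocks_inj]

theorem blockMat_blk (W : Matrix (Fin (n + m)) (Fin (n + m)) α) :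
    blockMat (blk11 W) (blk12 W) (blk21 W) (blk22 W) = W := by
  rw [blockMat, blk11, blk12, blk21, blk22, fromBlocks_toBlocks, ← reindex_symm,
    Equiv.apply_symm_apply]

theorem dSum_eq_blockMat [AddCommGroup α] (X : Matrix (Fin n) (Fin n) α)
    (Y : Matrix (Fin m) (Fin m) α) : dSum X Y = blockMat X 0 0 Y := rfl

theorem upTri_eq_blockMat [AddCommGroup α] (X : Matrix (Fin n) (Fin n) α)
    (Z : Matrix (Fin n) (Fin m) α) (Y : Matrix (Fin m) (Fin m) α) :
    upTri X Z Y = blockMat X Z 0 Y := rfl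

end BlockMatrix

section ScalarAction

variable {R : Type*} [CommRing R] {M : Type*} [AddCommGroup M] [Module R M] {p q n m k l : ℕ}

theorem scalMul_blockMat (A : Matrix (Fin p) (Fin n) R) (B : Matrix (Fin p) (Fin m) R)
    (C : Matrix (Fin q) (Fin n) R) (D : Matrix (Fin q) (Fin m) R)
    (X : Matrix (Fin n) (Fin k) M) (Z : Matrix (Fin n) (Fin l) M)
    (W : Matrix (Fin m) (Fin k) M) (Y : Matrix (Fin m) (Fin l) M) :
    scalMul (blockMat A B C D) (blockMat X Z W Y) =
      blockMat (scalMul A X + scalMul B W) (scalMul A Z + scalMul B Y)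
        (scalMul C X + scalMul D W) (scalMul C Z + scalMul D Y) := by
  ext i j
  induction i using Fin.addCases <;> induction j using Fin.addCases <;>
    simp [scalMul, blockMat, Fin.sum_univ_add]

theorem mulScal_blockMat (X : Matrix (Fin p) (Fin n) M) (Z : Matrix (Fin p) (Fin m) M)
    (W : Matrix (Fin q) (Fin n) M) (Y : Matrix (Fin q) (Fin m) M)
    (A : Matrix (Fin n) (Fin k) R) (B : Matrix (Fin n) (Fin l) R)
    (C : Matrix (Fin m) (Fin k) R) (D : Matrix (Fin m) (Fin l) R) :
    mulScal (blockMat X Z W Y) (blockMat A B C D) =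
      blockMat (mulScal X A + mulScal Z C) (mulScal X B + mulScal Z D)
        (mulScal W A + mulScal Y C) (mulScal W B + mulScal Y D) := by
  ext i j
  induction i using Fin.addCases <;> induction j using Fin.addCases <;>
    simp [mulScal, blockMat, Fin.sum_univ_add]

@[simp]
theorem scalMul_smul_one (r : R) (X : Matrix (Fin n) (Fin m) M) :
    scalMul (r • (1 : Matrix (Fin n) (Fin n) R)) X = r • X := by
  ext i j
  simp [scalMul, one_apply, ite_smul]

@[simp]
theorem mulScal_smul_one (r : R) (X : Matrix (Fin n) (Fin m) M) :
    mulScal X (r • (1 : Matrix (Fin m) (Fin m) R)) = r • X := by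
  ext i j
  simp [mulScal, one_apply, ite_smul]

@[simp]
theorem scalMul_one (X : Matrix (Fin n) (Fin m) M) :
    scalMul (1 : Matrix (Fin n) (Fin n) R) X = X := by
  simpa using scalMul_smul_one (1 : R) X

@[simp]
theorem mulScal_one (X : Matrix (Fin n) (Fin m) M) :
    mulScal X (1 : Matrix (Fin m) (Fin m) R) = X := by
  simpa using mulScal_smul_one (1 : R) X

@[simp]
theorem scalMul_zero_left (X : Matrix (Fin n) (Fin m) M) :
    scalMul (0 : Matrix (Fin p) (Fin n) R) X = 0 := by
  ext; simp [scalMul]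

@[simp]
theorem scalMul_zero_right (S : Matrix (Fin p) (Fin n) R) :
    scalMul S (0 : Matrix (Fin n) (Fin m) M) = 0 := by
  ext; simp [scalMul]

@[simp]
theorem mulScal_zero_left (T : Matrix (Fin n) (Fin m) R) :
    mulScal (0 : Matrix (Fin p) (Fin n) M) T = 0 := by
  ext; simp [mulScal]

@[simp]
theorem mulScal_zero_right (X : Matrix (Fin p) (Fin n) M) :
    mulScal X (0 : Matrix (Fin n) (Fin m) R) = 0 := by
  ext; simp [mulScal]

@[simp]
theorem mulScal_neg (X : Matrix (Fin p) (Fin n) M) (T : Matrix (Fin n) (Fin m) R) :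
    mulScal X (-T) = -mulScal X T := by
  ext; simp [mulScal]

end ScalarAction

section Shear

variable {R : Type*} [CommRing R] {M : Type*} [AddCommGroup M] [Module R M] {n m : ℕ}

def shear (T : Matrix (Fin n) (Fin m) R) : Matrix (Fin (n + m)) (Fin (n + m)) R :=
  blockMat 1 T 0 1

theorem shear_mul_shear (T T' : Matrix (Fin n) (Fin m) R) :
    shear T * shear T' = shear (T + T') := by
  rw [shear, shear, shear, blockMat, blockMat, blockMat, reindex_apply, reindex_apply,
    reindex_apply, submatrix_mul_equiv _ _ _ finSumFinEquiv.symm, fromBlocks_multiply]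
  simp [add_comm]

theorem shear_zero : shear (0 : Matrix (Fin n) (Fin m) R) = 1 := by
  rw [shear, blockMat, fromBlocks_one, reindex_apply, submatrix_one_equiv]

theorem shear_mul_shear_neg (T : Matrix (Fin n) (Fin m) R) : shear T * shear (-T) = 1 := by
  rw [shear_mul_shear, add_neg_cancel, shear_zero]

theorem shear_neg_mul_shear (T : Matrix (Fin n) (Fin m) R) : shear (-T) * shear T = 1 := by
  rw [shear_mul_shear, neg_add_cancel, shear_zero]

theorem scalMul_shear_mulScal_dSum (X : Matrix (Fin n) (Fin n) M) (Y : Matrix (Fin m) (Fin m) M)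
    (T : Matrix (Fin n) (Fin m) R) :
    scalMul (shear T) (mulScal (dSum X Y) (shear (-T))) =
      upTri X (scalMul T Y - mulScal X T) Y := by
  rw [shear, shear, dSum_eq_blockMat, upTri_eq_blockMat, mulScal_blockMat, scalMul_blockMat]
  simp [sub_eq_neg_add]

end Shear

section Intertwining

variable {R : Type*} [CommRing R] {M : Type*} [AddCommGroup M] [Module R M]
  {N : Type*} [AddCommGroup N] [Module R N]
  {Ω : ∀ n : ℕ, Set (Matrix (Fin n) (Fin n) M)}
  {f : ∀ n : ℕ, Matrix (Fin n) (Fin n) M → Matrix (Fin n) (Fin n) N}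

theorem RespectsIntertwining.of_respectsSim (hΩ : IsNCSet Ω) (hds : RespectsDirSums Ω f)
    (hsim : RespectsSim R Ω f) : RespectsIntertwining R Ω f := by
  intro n m X Y T hX hY hT
  have hXY := hΩ n m X Y hX hY
  have hconj := scalMul_shear_mulScal_dSum X Y T
  rw [hT, sub_self, upTri_eq_blockMat, ← dSum_eq_blockMat] at hconj
  have hf := hsim _ _ _ _ hXY (shear_mul_shear_neg T) (shear_neg_mul_shear T) (by rwa [hconj])
  rw [hconj, hds n m X Y hX hY, scalMul_shear_mulScal_dSum, dSum_eq_blockMat, upTri_eq_blockMat,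
    blockMat_inj] at hf
  exact (sub_eq_zero.mp hf.2.1.symm).symm

end Intertwining

namespace RespectsIntertwining

variable {R : Type*} [CommRing R] {M : Type*} [AddCommGroup M] [Module R M]
  {N : Type*} [AddCommGroup N] [Module R N]
  {Ω : ∀ n : ℕ, Set (Matrix (Fin n) (Fin n) M)}
  {f : ∀ n : ℕ, Matrix (Fin n) (Fin n) M → Matrix (Fin n) (Fin n) N}
  {n m : ℕ} {X : Matrix (Fin n) (Fin n) M} {Y : Matrix (Fin m) (Fin m) M}
  {Z : Matrix (Fin n) (Fin m) M}

theorem blk11_blk21_upTri (hf : RespectsIntertwining R Ω f) (hXY : dSum X Y ∈ Ω (n + m))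
    (hfXY : f (n + m) (dSum X Y) = dSum (f n X) (f m Y)) (hZ : upTri X Z Y ∈ Ω (n + m)) :
    blk11 (f (n + m) (upTri X Z Y)) = f n X ∧ blk21 (f (n + m) (upTri X Z Y)) = 0 := by
  have h := hf _ _ _ _ (blockMat (1 : Matrix (Fin n) (Fin n) R) 0 0 (0 : Matrix (Fin m) (Fin m) R))
    hZ hXY (by rw [upTri_eq_blockMat, dSum_eq_blockMat, mulScal_blockMat, scalMul_blockMat]; simp)
  rw [hfXY, ← blockMat_blk (f _ (upTri X Z Y)), dSum_eq_blockMat, mulScal_blockMat,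
    scalMul_blockMat, blockMat_inj] at h
  simpa using h

theorem blk22_upTri (hf : RespectsIntertwining R Ω f) (hXY : dSum X Y ∈ Ω (n + m))
    (hfXY : f (n + m) (dSum X Y) = dSum (f n X) (f m Y)) (hZ : upTri X Z Y ∈ Ω (n + m)) :
    blk22 (f (n + m) (upTri X Z Y)) = f m Y := by
  have h := hf _ _ _ _ (blockMat (0 : Matrix (Fin n) (Fin n) R) 0 0 (1 : Matrix (Fin m) (Fin m) R))
    hXY hZ (by rw [upTri_eq_blockMat, dSum_eq_blockMat, mulScal_blockMat, scalMul_blockMat]; simp)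
  rw [hfXY, ← blockMat_blk (f _ (upTri X Z Y)), dSum_eq_blockMat, mulScal_blockMat,
    scalMul_blockMat, blockMat_inj] at h
  simpa using h.2.2.2.symm

theorem blk12_upTri_smul (hf : RespectsIntertwining R Ω f) (hZ : upTri X Z Y ∈ Ω (n + m))
    (r : R) (hrZ : upTri X (r • Z) Y ∈ Ω (n + m)) :
    blk12 (f (n + m) (upTri X (r • Z) Y)) = r • blk12 (f (n + m) (upTri X Z Y)) := by
  have h := hf _ _ _ _ (blockMat (r • 1 : Matrix (Fin n) (Fin n) R) 0 0 (1 : Matrix (Fin m) (Fin m) R))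
    hrZ hZ (by rw [upTri_eq_blockMat, upTri_eq_blockMat, mulScal_blockMat, scalMul_blockMat]; simp)
  rw [← blockMat_blk (f _ (upTri X Z Y)), ← blockMat_blk (f _ (upTri X (r • Z) Y)),
    mulScal_blockMat, scalMul_blockMat, blockMat_inj] at h
  simpa using h.2.1

end RespectsIntertwining

/-- For a nc function `f` on a nc set `Ω`, if the block upper triangular
matrix `[[X, Z],[0, Y]]` lies in `Ω`, then `f([[X, Z],[0, Y]])` is block upper triangular
with diagonal blocks `f(X)`, `f(Y)` and zero lower left block; moreover if `[[X, rZ],[0, Y]]`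
also lies in `Ω`, then the (1,2) block of its `f`-image is `r` times the (1,2) block
`Δ(Z)` of `f([[X, Z],[0, Y]])`. -/
theorem nc_function_on_upper_triangular
    {R : Type*} [CommRing R] {M : Type*} [AddCommGroup M] [Module R M]
    {N : Type*} [AddCommGroup N] [Module R N]
    (Ω : ∀ n : ℕ, Set (Matrix (Fin n) (Fin n) M))
    (f : ∀ n : ℕ, Matrix (Fin n) (Fin n) M → Matrix (Fin n) (Fin n) N)
    (hΩ : IsNCSet Ω) (hds : RespectsDirSums Ω f) (hsim : RespectsSim R Ω f)
    {n m : ℕ} (X : Matrix (Fin n) (Fin n) M) (Y : Matrix (Fin m) (Fin m) M)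
    (Z : Matrix (Fin n) (Fin m) M)
    (hX : X ∈ Ω n) (hY : Y ∈ Ω m) (hZ : upTri X Z Y ∈ Ω (n + m)) :
    blk11 (f (n + m) (upTri X Z Y)) = f n X ∧
    blk22 (f (n + m) (upTri X Z Y)) = f m Y ∧
    blk21 (f (n + m) (upTri X Z Y)) = 0 ∧
    ∀ r : R, upTri X (r • Z) Y ∈ Ω (n + m) →
      blk12 (f (n + m) (upTri X (r • Z) Y)) = r • blk12 (f (n + m) (upTri X Z Y)) := by
  have hf := RespectsIntertwining.of_respectsSim hΩ hds hsim
  have hXY := hΩ n m X Y hX hY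
  have hfXY := hds n m X Y hX hY
  obtain ⟨h11, h21⟩ := hf.blk11_blk21_upTri hXY hfXY hZ
  exact ⟨h11, hf.blk22_upTri hXY hfXY hZ, h21, hf.blk12_upTri_smul hZ⟩
end

section
/- Let R be a commutative ring with identity, N a module over R, and d ≥ 1. Let f : Nilp_d(R) → N_nc be a nc function on the nc set of jointly nilpotent d-tuples of square matrices over R. For each word w = g_{i_1}···g_{i_ℓ} ∈ G_d, let T_w ∈ (R^{(ℓ+1)×(ℓ+1)})^d be the jointly nilpotent tuple whose j-th matrix has (k, k+1) entry equal to 1 exactly when i_k = j (1 ≤ k ≤ ℓ) and all other entries 0, and let c_w ∈ N be the (1, ℓ+1) entry of f(T_w) (for the empty word, c_∅ := f(0_{1×1}) ∈ N ≅ N^{1×1}). Then for every n ≥ 1 and every jointly nilpotent X = (X_1,...,X_d) ∈ (R^{n×n})^d: f(X) = Σ_{w ∈ G_d} X^w • c_w, where the sum has finitely many nonzero terms (since X^w = 0 for all sufficiently long words w). -/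
/-!
If `X i * A = A * Y i` for all `i`, conjugating `X ⊕ Y` by the block unitriangular matrix
`[[1, A], [0, 1]]` fixes it, and the off-diagonal block of `f (X ⊕ Y) = S f (X ⊕ Y) S⁻¹` gives
`A f(Y) = f(X) A`: nc functions respect intertwiners.

Let `U` be the tuple of left creation operators `e_q ↦ e_{j q}` on the words of length `< κ`,
which is jointly nilpotent. If `X^w = 0` for `|w| ≥ κ`, the matrix with columns `X^q e_b`
intertwines `X` with `U`, so `f(X)_{ab} = ∑_q (X^q)_{ab} f(U)_{q,∅}`. The matrix with rows
`e_{suffixes of w}` intertwines `T_w` with `U`, which identifies `f(U)_{w,∅}` with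
`c_w = f(T_w)_{1,|w|+1}`.
-/

open Matrix

/-- Componentwise direct sum of `d`-tuples of square matrices. -/
def tDSum {R : Type*} [CommRing R] {d n m : ℕ}
    (X : Fin d → Matrix (Fin n) (Fin n) R) (Y : Fin d → Matrix (Fin m) (Fin m) R) :
    Fin d → Matrix (Fin (n + m)) (Fin (n + m)) R :=
  fun i => (Matrix.reindex finSumFinEquiv finSumFinEquiv) (Matrix.fromBlocks (X i) 0 0 (Y i))

/-- A `d`-tuple of square matrices is jointly nilpotent. -/
def JointlyNilp {R : Type*} [CommRing R] {d n : ℕ}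
    (X : Fin d → Matrix (Fin n) (Fin n) R) : Prop :=
  ∃ κ : ℕ, ∀ w : List (Fin d), κ ≤ w.length → (w.map X).prod = 0

/-- The jointly nilpotent tuple `T_w` associated to a word `w`: the `j`-th matrix has
`(k, k+1)` entry `1` exactly when the `k`-th letter of `w` is `j`. -/
def wordTuple (R : Type*) [CommRing R] {d : ℕ} (w : List (Fin d)) :
    Fin d → Matrix (Fin (w.length + 1)) (Fin (w.length + 1)) R :=
  fun j => Matrix.of fun a b =>
    if h : (a : ℕ) + 1 = (b : ℕ) then
      (if w.get ⟨(a : ℕ), by have := b.isLt; omega⟩ = j then 1 else 0)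
    else 0

section

variable {R : Type*} [CommRing R] {N : Type*} [AddCommGroup N] [Module R N] {d : ℕ}

structure IsNCFunctionOnNilp
    (f : ∀ n : ℕ, (Fin d → Matrix (Fin n) (Fin n) R) → Matrix (Fin n) (Fin n) N) : Prop where
  map_tDSum : ∀ (n m : ℕ) (X : Fin d → Matrix (Fin n) (Fin n) R)
      (Y : Fin d → Matrix (Fin m) (Fin m) R), JointlyNilp X → JointlyNilp Y →
      f (n + m) (tDSum X Y) = dSum (f n X) (f m Y)
  map_conj : ∀ (n : ℕ) (X : Fin d → Matrix (Fin n) (Fin n) R)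
      (S T : Matrix (Fin n) (Fin n) R), JointlyNilp X → S * T = 1 → T * S = 1 →
      JointlyNilp (fun i => S * X i * T) →
      f n (fun i => S * X i * T) = scalMul S (mulScal (f n X) T)

theorem list_prod_map_tDSum {n m : ℕ} (X : Fin d → Matrix (Fin n) (Fin n) R)
    (Y : Fin d → Matrix (Fin m) (Fin m) R) (w : List (Fin d)) :
    (w.map (tDSum X Y)).prod =
      reindex finSumFinEquiv finSumFinEquiv (fromBlocks (w.map X).prod 0 0 (w.map Y).prod) := by
  induction w with
  | nil => simp
  | cons j w ih =>
    simp only [List.map_cons, List.prod_cons, ih, tDSum, reindex_apply, submatrix_mul_equiv,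
      fromBlocks_multiply]
    simp

theorem JointlyNilp.tDSum {n m : ℕ} {X : Fin d → Matrix (Fin n) (Fin n) R}
    {Y : Fin d → Matrix (Fin m) (Fin m) R} (hX : JointlyNilp X) (hY : JointlyNilp Y) :
    JointlyNilp (tDSum X Y) := by
  obtain ⟨κ₁, h₁⟩ := hX
  obtain ⟨κ₂, h₂⟩ := hY
  refine ⟨max κ₁ κ₂, fun w hw => ?_⟩
  rw [list_prod_map_tDSum, h₁ w (le_of_max_le_left hw), h₂ w (le_of_max_le_right hw)]
  simp

def blockUnitriangular {m n : ℕ} (A : Matrix (Fin m) (Fin n) R) :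
    Matrix (Fin (m + n)) (Fin (m + n)) R :=
  reindex finSumFinEquiv finSumFinEquiv (fromBlocks 1 A 0 1)

theorem blockUnitriangular_mul_neg {m n : ℕ} (A : Matrix (Fin m) (Fin n) R) :
    blockUnitriangular A * blockUnitriangular (-A) = 1 := by
  simp [blockUnitriangular, submatrix_mul_equiv, fromBlocks_multiply]

theorem blockUnitriangular_conj_tDSum {m n : ℕ} {X : Fin d → Matrix (Fin m) (Fin m) R}
    {Y : Fin d → Matrix (Fin n) (Fin n) R} {A : Matrix (Fin m) (Fin n) R}
    (hA : ∀ i, X i * A = A * Y i) (i : Fin d) :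
    blockUnitriangular A * tDSum X Y i * blockUnitriangular (-A) = tDSum X Y i := by
  simp [blockUnitriangular, tDSum, submatrix_mul_equiv, fromBlocks_multiply, hA]

theorem scalMul_mulScal_blockUnitriangular_apply {m n : ℕ} (A : Matrix (Fin m) (Fin n) R)
    (F : Matrix (Fin m) (Fin m) N) (G : Matrix (Fin n) (Fin n) N) (a : Fin m) (b : Fin n) :
    scalMul (blockUnitriangular A) (mulScal (dSum F G) (blockUnitriangular (-A)))
      (finSumFinEquiv (.inl a)) (finSumFinEquiv (.inr b)) = scalMul A G a b - mulScal F A a b := by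
  simp only [scalMul, mulScal, blockUnitriangular, dSum, reindex_apply, of_apply, submatrix_apply,
    ← finSumFinEquiv.sum_comp, Fintype.sum_sum_type, Equiv.symm_apply_apply, fromBlocks_apply₁₁,
    fromBlocks_apply₁₂, fromBlocks_apply₂₁, fromBlocks_apply₂₂, Matrix.zero_apply, zero_smul,
    smul_zero, Finset.sum_const_zero, add_zero, zero_add, Matrix.neg_apply, neg_smul,
    Finset.sum_neg_distrib, one_apply, ite_smul, one_smul, Finset.sum_ite_eq, Finset.sum_ite_eq',
    Finset.mem_univ, if_true]
  abel

theorem IsNCFunctionOnNilp.scalMul_eq_mulScal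
    {f : ∀ n : ℕ, (Fin d → Matrix (Fin n) (Fin n) R) → Matrix (Fin n) (Fin n) N}
    (hf : IsNCFunctionOnNilp f) {m n : ℕ} {X : Fin d → Matrix (Fin m) (Fin m) R}
    {Y : Fin d → Matrix (Fin n) (Fin n) R} (hX : JointlyNilp X) (hY : JointlyNilp Y)
    {A : Matrix (Fin m) (Fin n) R} (hA : ∀ i, X i * A = A * Y i) :
    scalMul A (f n Y) = mulScal (f m X) A := by
  have hZ := hX.tDSum hY
  have hconj := hf.map_conj _ _ _ _ hZ (blockUnitriangular_mul_neg A)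
    (by simpa using blockUnitriangular_mul_neg (-A))
    (by simpa only [blockUnitriangular_conj_tDSum hA] using hZ)
  simp only [blockUnitriangular_conj_tDSum hA, hf.map_tDSum _ _ _ _ hX hY] at hconj
  ext a b
  have := congrFun (congrFun hconj (finSumFinEquiv (.inl a))) (finSumFinEquiv (.inr b))
  rw [scalMul_mulScal_blockUnitriangular_apply] at this
  simpa [dSum, sub_eq_zero, eq_comm] using this

theorem scalMul_apply_of_row_eq_ite {m n p : ℕ} {A : Matrix (Fin m) (Fin n) R}
    (F : Matrix (Fin n) (Fin p) N) {a : Fin m} {k₀ : Fin n}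
    (hA : ∀ k, A a k = if k = k₀ then 1 else 0) (q : Fin p) :
    scalMul A F a q = F k₀ q := by
  simp [scalMul, hA]

theorem mulScal_apply_of_col_eq_ite {m n p : ℕ} (F : Matrix (Fin m) (Fin n) N)
    {B : Matrix (Fin n) (Fin p) R} {q : Fin p} {k₀ : Fin n}
    (hB : ∀ k, B k q = if k = k₀ then 1 else 0) (a : Fin m) :
    mulScal F B a q = F a k₀ := by
  simp [mulScal, hB]

theorem wordTuple_mul_apply {n : ℕ} (w : List (Fin d)) (j : Fin d)
    (M : Matrix (Fin (w.length + 1)) (Fin n) R) (k : Fin (w.length + 1)) (q : Fin n) :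
    (wordTuple R w j * M) k q =
      if h : (k : ℕ) < w.length then (if w[(k : ℕ)] = j then M ⟨k + 1, by omega⟩ q else 0)
      else 0 := by
  rw [mul_apply]
  by_cases hk : (k : ℕ) < w.length
  · rw [dif_pos hk, Finset.sum_eq_single ⟨k + 1, by omega⟩]
    · simp [wordTuple]
    · intro m _ hm
      simp [wordTuple, show (k : ℕ) + 1 ≠ m from fun h => hm (Fin.ext h.symm)]
    · simp
  · rw [dif_neg hk]
    refine Finset.sum_eq_zero fun m _ => ?_
    simp [wordTuple, show (k : ℕ) + 1 ≠ m by omega]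

theorem list_prod_map_wordTuple_apply_eq_zero (w u : List (Fin d)) (a b : Fin (w.length + 1))
    (h : (b : ℕ) ≠ a + u.length) : (u.map (wordTuple R w)).prod a b = 0 := by
  induction u generalizing a with
  | nil => exact one_apply_ne fun hab => h (by simp [hab])
  | cons j u ih =>
    rw [List.map_cons, List.prod_cons, wordTuple_mul_apply]
    split_ifs <;> simp_all [Nat.add_right_comm, Nat.add_assoc]

theorem jointlyNilp_wordTuple (w : List (Fin d)) : JointlyNilp (wordTuple R w) :=
  ⟨w.length + 1, fun u hu => by
    ext a b
    exact list_prod_map_wordTuple_apply_eq_zero w u a b (by omega)⟩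

noncomputable def shortWords (d κ : ℕ) : Finset (List (Fin d)) :=
  (List.finite_length_lt (Fin d) κ).toFinset

theorem mem_shortWords {κ : ℕ} {w : List (Fin d)} : w ∈ shortWords d κ ↔ w.length < κ :=
  Set.Finite.mem_toFinset _

noncomputable def enumWord (d κ : ℕ) (p : Fin (shortWords d κ).card) : List (Fin d) :=
  ((shortWords d κ).equivFin.symm p).1

noncomputable def wordIndex {κ : ℕ} (w : List (Fin d)) (hw : w.length < κ) :
    Fin (shortWords d κ).card :=
  (shortWords d κ).equivFin ⟨w, mem_shortWords.2 hw⟩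

theorem enumWord_length_lt {κ : ℕ} (p : Fin (shortWords d κ).card) :
    (enumWord d κ p).length < κ :=
  mem_shortWords.1 ((shortWords d κ).equivFin.symm p).2

theorem enumWord_eq_iff {κ : ℕ} {p : Fin (shortWords d κ).card} {w : List (Fin d)}
    (hw : w.length < κ) : enumWord d κ p = w ↔ p = wordIndex w hw := by
  rw [wordIndex, ← Equiv.symm_apply_eq, Subtype.ext_iff]
  rfl

@[simp]
theorem enumWord_wordIndex {κ : ℕ} (w : List (Fin d)) (hw : w.length < κ) :
    enumWord d κ (wordIndex w hw) = w :=
  (enumWord_eq_iff hw).2 rfl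

theorem wordIndex_enumWord {κ : ℕ} (p : Fin (shortWords d κ).card) :
    wordIndex (enumWord d κ p) (enumWord_length_lt p) = p :=
  ((enumWord_eq_iff _).1 rfl).symm

theorem enumWord_injective {κ : ℕ} : Function.Injective (enumWord d κ) := fun p q h => by
  rw [← wordIndex_enumWord p, ← wordIndex_enumWord q]
  simp only [h]

theorem sum_ite_enumWord_eq {M : Type*} [AddCommMonoid M] {κ : ℕ} (w : List (Fin d))
    (g : Fin (shortWords d κ).card → M) :
    ∑ p, (if enumWord d κ p = w then g p else 0) =
      if hw : w.length < κ then g (wordIndex w hw) else 0 := by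
  split_ifs with hw
  · simp_rw [enumWord_eq_iff hw, Finset.sum_ite_eq', Finset.mem_univ, if_true]
  · refine Finset.sum_eq_zero fun p _ => if_neg fun h => hw ?_
    exact h ▸ enumWord_length_lt p

theorem sum_enumWord_eq_sum_range {M : Type*} [AddCommMonoid M] (κ : ℕ)
    (G : List (Fin d) → M) :
    ∑ p, G (enumWord d κ p) = ∑ ℓ ∈ Finset.range κ, ∑ v : Fin ℓ → Fin d, G (List.ofFn v) := by
  calc ∑ p, G (enumWord d κ p) = ∑ w ∈ shortWords d κ, G w :=
        (Equiv.sum_comp (shortWords d κ).equivFin.symm (fun w => G w.1)).trans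
          (Finset.sum_coe_sort _ _)
    _ = ∑ σ ∈ (Finset.range κ).sigma fun ℓ => (Finset.univ : Finset (Fin ℓ → Fin d)),
          G (List.ofFn σ.2) := by
        refine Finset.sum_equiv List.equivSigmaTuple (fun w => ?_) (fun w _ => ?_)
        · simp [mem_shortWords, List.equivSigmaTuple]
        · simp [List.equivSigmaTuple]
    _ = _ := Finset.sum_sigma _ _ _

noncomputable def universalNilpTuple (R : Type*) [CommRing R] (d κ : ℕ) :
    Fin d → Matrix (Fin (shortWords d κ).card) (Fin (shortWords d κ).card) R :=
  fun j => of fun p q => if enumWord d κ p = j :: enumWord d κ q then 1 else 0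

theorem list_prod_map_universalNilpTuple_apply {κ : ℕ} (u : List (Fin d))
    (p q : Fin (shortWords d κ).card) :
    (u.map (universalNilpTuple R d κ)).prod p q =
      if enumWord d κ p = u ++ enumWord d κ q then 1 else 0 := by
  induction u generalizing p with
  | nil => simp [one_apply, enumWord_injective.eq_iff]
  | cons j u ih =>
    rw [List.map_cons, List.prod_cons, mul_apply]
    simp only [universalNilpTuple, of_apply, ih, mul_ite, mul_one, mul_zero]
    rw [sum_ite_enumWord_eq, List.cons_append]
    by_cases hlen : (u ++ enumWord d κ q).length < κ
    · rw [dif_pos hlen, enumWord_wordIndex]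
    · refine (dif_neg hlen).trans (if_neg fun h => hlen ?_).symm
      have := h ▸ enumWord_length_lt p
      simp only [List.length_cons] at this
      omega

theorem jointlyNilp_universalNilpTuple (κ : ℕ) : JointlyNilp (universalNilpTuple R d κ) :=
  ⟨κ, fun u hu => by
    ext p q
    rw [list_prod_map_universalNilpTuple_apply, Matrix.zero_apply, if_neg]
    intro h
    have := h ▸ enumWord_length_lt p
    simp only [List.length_append] at this
    omega⟩

noncomputable def wordOrbitMatrix {n : ℕ} (κ : ℕ) (X : Fin d → Matrix (Fin n) (Fin n) R)
    (b : Fin n) :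
    Matrix (Fin n) (Fin (shortWords d κ).card) R :=
  of fun c q => ((enumWord d κ q).map X).prod c b

theorem mul_wordOrbitMatrix {n κ : ℕ} {X : Fin d → Matrix (Fin n) (Fin n) R}
    (hX : ∀ w : List (Fin d), κ ≤ w.length → (w.map X).prod = 0) (b : Fin n) (j : Fin d) :
    X j * wordOrbitMatrix κ X b = wordOrbitMatrix κ X b * universalNilpTuple R d κ j := by
  ext c q
  have hL : (X j * wordOrbitMatrix κ X b) c q = ((j :: enumWord d κ q).map X).prod c b := by
    simp [wordOrbitMatrix, mul_apply]
  rw [hL, mul_apply]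
  simp only [wordOrbitMatrix, universalNilpTuple, of_apply, mul_ite, mul_one, mul_zero]
  rw [sum_ite_enumWord_eq]
  split_ifs with hlen
  · rw [enumWord_wordIndex]
  · rw [hX _ (not_lt.1 hlen), Matrix.zero_apply]

noncomputable def suffixMatrix (R : Type*) [CommRing R] (κ : ℕ) (w : List (Fin d)) :
    Matrix (Fin (w.length + 1)) (Fin (shortWords d κ).card) R :=
  of fun k q => if enumWord d κ q = w.drop k then 1 else 0

theorem wordTuple_mul_suffixMatrix {κ : ℕ} {w : List (Fin d)} (hw : w.length < κ) (j : Fin d) :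
    wordTuple R w j * suffixMatrix R κ w = suffixMatrix R κ w * universalNilpTuple R d κ j := by
  ext k q
  rw [wordTuple_mul_apply, mul_apply]
  simp only [suffixMatrix, universalNilpTuple, of_apply, ite_mul, one_mul, zero_mul]
  rw [sum_ite_enumWord_eq, dif_pos (show (w.drop k).length < κ by rw [List.length_drop]; omega),
    enumWord_wordIndex]
  by_cases hk : (k : ℕ) < w.length
  · rw [dif_pos hk, List.drop_eq_getElem_cons hk]
    simp only [List.cons.injEq, @eq_comm _ (enumWord d κ q)]
    split_ifs <;> simp_all
  · rw [dif_neg hk, List.drop_eq_nil_of_le (by omega)]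
    simp

def taylorCoeff (f : ∀ n : ℕ, (Fin d → Matrix (Fin n) (Fin n) R) → Matrix (Fin n) (Fin n) N)
    (w : List (Fin d)) : N :=
  f (w.length + 1) (wordTuple R w) 0 (Fin.last w.length)

namespace IsNCFunctionOnNilp

variable {f : ∀ n : ℕ, (Fin d → Matrix (Fin n) (Fin n) R) → Matrix (Fin n) (Fin n) N}

theorem universalNilpTuple_apply_eq_taylorCoeff (hf : IsNCFunctionOnNilp f) {κ : ℕ}
    (hκ : 0 < κ) (p : Fin (shortWords d κ).card) :
    f _ (universalNilpTuple R d κ) p (wordIndex [] hκ) = taylorCoeff f (enumWord d κ p) := by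
  have key := congrFun (congrFun (hf.scalMul_eq_mulScal (jointlyNilp_wordTuple _)
    (jointlyNilp_universalNilpTuple κ) (wordTuple_mul_suffixMatrix (enumWord_length_lt p))) 0)
    (wordIndex [] hκ)
  have hrow (k) : suffixMatrix R κ (enumWord d κ p) 0 k = if k = p then 1 else 0 := by
    simp [suffixMatrix, enumWord_injective.eq_iff]
  have hcol (k : Fin ((enumWord d κ p).length + 1)) :
      suffixMatrix R κ (enumWord d κ p) k (wordIndex [] hκ) = if k = Fin.last _ then 1 else 0 := by
    simp only [suffixMatrix, of_apply, enumWord_wordIndex, @eq_comm _ [], List.drop_eq_nil_iff,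
      Fin.ext_iff, Fin.val_last]
    have := k.is_le
    split_ifs <;> first | rfl | omega
  rwa [scalMul_apply_of_row_eq_ite _ hrow, mulScal_apply_of_col_eq_ite _ hcol] at key

theorem apply_eq_sum_universalNilpTuple (hf : IsNCFunctionOnNilp f) {n κ : ℕ} (hκ : 0 < κ)
    {X : Fin d → Matrix (Fin n) (Fin n) R}
    (hX : ∀ w : List (Fin d), κ ≤ w.length → (w.map X).prod = 0) (a b : Fin n) :
    f n X a b = ∑ p, ((enumWord d κ p).map X).prod a b •
      f _ (universalNilpTuple R d κ) p (wordIndex [] hκ) := by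
  have key := congrFun (congrFun (hf.scalMul_eq_mulScal ⟨κ, hX⟩
    (jointlyNilp_universalNilpTuple κ) (mul_wordOrbitMatrix hX b)) a) (wordIndex [] hκ)
  rw [mulScal_apply_of_col_eq_ite _ (k₀ := b)] at key
  · exact key.symm
  · intro c
    simp [wordOrbitMatrix, one_apply]

end IsNCFunctionOnNilp

end

/-- Every nc function on the jointly nilpotent `d`-tuples of matrices
over `R` is the (finite) sum of its Taylor–Taylor series at `0`:
`f(X) = ∑_{w} X^w • c_w`, where `c_w` is the `(1, |w|+1)` entry of `f(T_w)`. -/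
theorem nc_function_on_nilpotents_is_power_series
    {R : Type*} [CommRing R] {N : Type*} [AddCommGroup N] [Module R N] {d : ℕ}
    (f : ∀ n : ℕ, (Fin d → Matrix (Fin n) (Fin n) R) → Matrix (Fin n) (Fin n) N)
    (hds : ∀ (n m : ℕ) (X : Fin d → Matrix (Fin n) (Fin n) R)
      (Y : Fin d → Matrix (Fin m) (Fin m) R), JointlyNilp X → JointlyNilp Y →
      f (n + m) (tDSum X Y) = dSum (f n X) (f m Y))
    (hsim : ∀ (n : ℕ) (X : Fin d → Matrix (Fin n) (Fin n) R)
      (S T : Matrix (Fin n) (Fin n) R), JointlyNilp X → S * T = 1 → T * S = 1 →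
      JointlyNilp (fun i => S * X i * T) →
      f n (fun i => S * X i * T) = scalMul S (mulScal (f n X) T)) :
    ∀ (n : ℕ) (X : Fin d → Matrix (Fin n) (Fin n) R) (κ : ℕ),
      (∀ w : List (Fin d), κ ≤ w.length → (w.map X).prod = 0) →
      f n X = ∑ ℓ ∈ Finset.range κ, ∑ v : Fin ℓ → Fin d,
        ((List.ofFn v).map X).prod.map
          (fun r => r • (f ((List.ofFn v).length + 1) (wordTuple R (List.ofFn v))
            0 (Fin.last (List.ofFn v).length))) := by
  intro n X κ hX
  have hf : IsNCFunctionOnNilp f := ⟨hds, hsim⟩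
  ext a b
  obtain rfl | hκ := Nat.eq_zero_or_pos κ
  · have : Subsingleton R := subsingleton_of_zero_eq_one
      (by simpa using (congrFun (congrFun (hX [] le_rfl) a) a).symm)
    have := Module.subsingleton R N
    exact Subsingleton.elim _ _
  simp only [hf.apply_eq_sum_universalNilpTuple hκ hX, hf.universalNilpTuple_apply_eq_taylorCoeff,
    sum_enumWord_eq_sum_range κ fun w => (w.map X).prod a b • taylorCoeff f w, Matrix.sum_apply,
    Matrix.map_apply]
  rfl
end

section
/- (Uniqueness of nc power series expansions on nilpotent matrices.) Let R be a commutative ring with identity, M and N modules over R, s ≥ 1 and Y ∈ M^{s×s}. Let (f_ℓ)_{ℓ≥0} and (g_ℓ)_{ℓ≥0} be two sequences of R-multilinear maps f_ℓ, g_ℓ : (M^{s×s})^ℓ → N^{s×s}. If Σ_{ℓ=0}^{∞} (X − ⊕^m Y)^{⊙_s ℓ} f_ℓ = Σ_{ℓ=0}^{∞} (X − ⊕^m Y)^{⊙_s ℓ} g_ℓ for every m ≥ 1 and every X ∈ Nilp(M, Y; sm) (both sums having finitely many nonzero terms), then f_ℓ = g_ℓ for every ℓ. In particular, the coefficients of a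 nc power series expansion centered at Y of a nc function on Nilp(M, Y) are uniquely determined by the function. -/
open Matrix

/-- The pair of block indices of an index of a `(m*s) × (m*s)` matrix viewed as an
`m × m` matrix of `s × s` blocks. -/
def toPair {m s : ℕ} (a : Fin (m * s)) : Fin m × Fin s := finProdFinEquiv.symm a

/-- The index of a `(m*s) × (m*s)` matrix corresponding to a pair of block indices. -/
def fromPair {m s : ℕ} (p : Fin m × Fin s) : Fin (m * s) := finProdFinEquiv p

/-- The `(i, j)` block (of size `s`) of a rectangular block matrix. -/
def blkOf {α : Type*} {m m' s : ℕ} (X : Matrix (Fin (m * s)) (Fin (m' * s)) α)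
    (i : Fin m) (j : Fin m') : Matrix (Fin s) (Fin s) α :=
  Matrix.of fun p q => X (fromPair (i, p)) (fromPair (j, q))

/-- The centered blocks `X_{ij} − δ_{ij} Y` of a square block matrix `X`. -/
def cBlk {M : Type*} [AddCommGroup M] {s m : ℕ} (Y : Matrix (Fin s) (Fin s) M)
    (X : Matrix (Fin (m * s)) (Fin (m * s)) M) (i j : Fin m) :
    Matrix (Fin s) (Fin s) M :=
  blkOf X i j - if i = j then Y else 0

/-- The sum, over all chains `c` from `α` to `γ` of length `ℓ`, of the elementary
tensors `B_{c₀c₁} ⊗ ⋯ ⊗ B_{c_{ℓ−1}c_ℓ}` in the `ℓ`-th tensor power. -/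
noncomputable def tensorChain (R : Type*) [CommRing R] {M : Type*} [AddCommGroup M]
    [Module R M] {s m : ℕ} (B : Fin m → Fin m → Matrix (Fin s) (Fin s) M) (ℓ : ℕ)
    (α γ : Fin m) : PiTensorProduct R (fun _ : Fin ℓ => Matrix (Fin s) (Fin s) M) :=
  ∑ c : Fin (ℓ + 1) → Fin m,
    if c 0 = α ∧ c (Fin.last ℓ) = γ then
      PiTensorProduct.tprod R (fun t : Fin ℓ => B (c t.castSucc) (c t.succ))
    else 0

/-- `X ∈ M^{sm×sm}` is nilpotent about `Y ∈ M^{s×s}`. -/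
def NilpAbout (R : Type*) [CommRing R] {M : Type*} [AddCommGroup M] [Module R M]
    {s : ℕ} (Y : Matrix (Fin s) (Fin s) M) (m : ℕ)
    (X : Matrix (Fin (m * s)) (Fin (m * s)) M) : Prop :=
  ∃ κ : ℕ, ∀ ℓ : ℕ, κ ≤ ℓ → ∀ α γ : Fin m, tensorChain R (cBlk Y X) ℓ α γ = 0

/-- The sum, over all chains `c` from `α` to `γ` of length `ℓ`, of the values
`F(B_{c₀c₁}, …, B_{c_{ℓ−1}c_ℓ})` of an `ℓ`-linear map `F`. -/
def chainApply {R : Type*} [CommRing R] {M N : Type*} [AddCommGroup M] [Module R M]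
    [AddCommGroup N] [Module R N] {s m : ℕ} (ℓ : ℕ)
    (F : MultilinearMap R (fun _ : Fin ℓ => Matrix (Fin s) (Fin s) M)
      (Matrix (Fin s) (Fin s) N))
    (B : Fin m → Fin m → Matrix (Fin s) (Fin s) M) (α γ : Fin m) :
    Matrix (Fin s) (Fin s) N :=
  ∑ c : Fin (ℓ + 1) → Fin m,
    if c 0 = α ∧ c (Fin.last ℓ) = γ then F (fun t => B (c t.castSucc) (c t.succ))
    else 0

/-- The term `(X − ⊕^m Y)^{⊙_s ℓ} f_ℓ` of a nc power series centered at `Y`. -/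
def sTerm {R : Type*} [CommRing R] {M N : Type*} [AddCommGroup M] [Module R M]
    [AddCommGroup N] [Module R N] {s : ℕ} (Y : Matrix (Fin s) (Fin s) M) (m : ℕ) (ℓ : ℕ)
    (F : MultilinearMap R (fun _ : Fin ℓ => Matrix (Fin s) (Fin s) M)
      (Matrix (Fin s) (Fin s) N))
    (X : Matrix (Fin (m * s)) (Fin (m * s)) M) :
    Matrix (Fin (m * s)) (Fin (m * s)) N :=
  Matrix.of fun a b =>
    chainApply ℓ F (cBlk Y X) (toPair a).1 (toPair b).1 (toPair a).2 (toPair b).2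

section Aux

lemma toPair_fromPair {m s : ℕ} (p : Fin m × Fin s) : toPair (fromPair p) = p :=
  Equiv.symm_apply_apply _ _

lemma chain_val {m ℓ : ℕ} (c : Fin (ℓ + 1) → Fin m)
    (h : ∀ t : Fin ℓ, ((c t.succ : ℕ)) = (c t.castSucc : ℕ) + 1) :
    ∀ t : Fin (ℓ + 1), (c t : ℕ) = (c 0 : ℕ) + (t : ℕ) := by
  intro t
  induction t using Fin.induction with
  | zero => simp
  | succ i ih =>
    have h2 := h i
    simp only [Fin.val_succ, Fin.coe_castSucc] at h2 ih ⊢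
    omega

variable {R : Type*} [CommRing R] {M N : Type*} [AddCommGroup M] [Module R M]
  [AddCommGroup N] [Module R N] {s : ℕ}

/-- The block matrix with the `Z t` on the superdiagonal and `0` elsewhere. -/
def diagShift {ℓ : ℕ} (Z : Fin ℓ → Matrix (Fin s) (Fin s) M) (i j : Fin (ℓ + 1)) :
    Matrix (Fin s) (Fin s) M :=
  if h : (j : ℕ) = (i : ℕ) + 1 then Z ⟨i, by have := j.isLt; omega⟩ else 0

/-- The test matrix: `Y` on the diagonal blocks and `Z t` on the superdiagonal blocks. -/
def bigX {ℓ : ℕ} (Y : Matrix (Fin s) (Fin s) M) (Z : Fin ℓ → Matrix (Fin s) (Fin s) M) :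
    Matrix (Fin ((ℓ + 1) * s)) (Fin ((ℓ + 1) * s)) M :=
  Matrix.of fun a b =>
    (if (toPair a).1 = (toPair b).1 then Y (toPair a).2 (toPair b).2 else 0) +
      diagShift Z (toPair a).1 (toPair b).1 (toPair a).2 (toPair b).2

lemma cBlk_bigX {ℓ : ℕ} (Y : Matrix (Fin s) (Fin s) M)
    (Z : Fin ℓ → Matrix (Fin s) (Fin s) M) :
    cBlk Y (bigX Y Z) = diagShift Z := by
  funext i j
  ext p q
  simp only [cBlk, blkOf, bigX, Matrix.of_apply, Matrix.sub_apply, toPair_fromPair]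
  by_cases hij : i = j <;> simp [hij]

lemma nilp_bigX (R : Type*) [CommRing R] {M : Type*} [AddCommGroup M] [Module R M]
    {s ℓ : ℕ} (Y : Matrix (Fin s) (Fin s) M) (Z : Fin ℓ → Matrix (Fin s) (Fin s) M) :
    NilpAbout R Y (ℓ + 1) (bigX Y Z) := by
  refine ⟨ℓ + 1, fun ℓ' hℓ' α γ => ?_⟩
  rw [tensorChain, cBlk_bigX]
  apply Finset.sum_eq_zero
  intro c _
  by_cases hall : ∀ t : Fin ℓ', ((c t.succ : ℕ)) = (c t.castSucc : ℕ) + 1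
  · exfalso
    have h1 := chain_val c hall (Fin.last ℓ')
    have h2 := (c (Fin.last ℓ')).isLt
    simp only [Fin.val_last] at h1
    omega
  · push_neg at hall
    obtain ⟨t, ht⟩ := hall
    split
    · exact MultilinearMap.map_coord_zero (PiTensorProduct.tprod R) t (dif_neg ht)
    · rfl

lemma chainApply_large {ℓ ℓ' : ℕ} (hℓ' : ℓ + 1 ≤ ℓ')
    (F' : MultilinearMap R (fun _ : Fin ℓ' => Matrix (Fin s) (Fin s) M)
      (Matrix (Fin s) (Fin s) N))
    (Z : Fin ℓ → Matrix (Fin s) (Fin s) M) (α γ : Fin (ℓ + 1)) :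
    chainApply ℓ' F' (diagShift Z) α γ = 0 := by
  rw [chainApply]
  apply Finset.sum_eq_zero
  intro c _
  by_cases hall : ∀ t : Fin ℓ', ((c t.succ : ℕ)) = (c t.castSucc : ℕ) + 1
  · exfalso
    have h1 := chain_val c hall (Fin.last ℓ')
    have h2 := (c (Fin.last ℓ')).isLt
    simp only [Fin.val_last] at h1
    omega
  · push_neg at hall
    obtain ⟨t, ht⟩ := hall
    split
    · exact F'.map_coord_zero t (dif_neg ht)
    · rfl

lemma chainApply_ne {ℓ ℓ' : ℕ} (hℓ' : ℓ' ≠ ℓ)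
    (F' : MultilinearMap R (fun _ : Fin ℓ' => Matrix (Fin s) (Fin s) M)
      (Matrix (Fin s) (Fin s) N))
    (Z : Fin ℓ → Matrix (Fin s) (Fin s) M) :
    chainApply ℓ' F' (diagShift Z) (0 : Fin (ℓ + 1)) (Fin.last ℓ) = 0 := by
  rw [chainApply]
  apply Finset.sum_eq_zero
  intro c _
  by_cases hall : ∀ t : Fin ℓ', ((c t.succ : ℕ)) = (c t.castSucc : ℕ) + 1
  · rw [if_neg]
    rintro ⟨h0, hl⟩
    have h1 := chain_val c hall (Fin.last ℓ')
    rw [h0, hl] at h1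
    simp only [Fin.val_last, Fin.val_zero] at h1
    omega
  · push_neg at hall
    obtain ⟨t, ht⟩ := hall
    split
    · exact F'.map_coord_zero t (dif_neg ht)
    · rfl

lemma chainApply_eq {ℓ : ℕ}
    (F' : MultilinearMap R (fun _ : Fin ℓ => Matrix (Fin s) (Fin s) M)
      (Matrix (Fin s) (Fin s) N))
    (Z : Fin ℓ → Matrix (Fin s) (Fin s) M) :
    chainApply ℓ F' (diagShift Z) (0 : Fin (ℓ + 1)) (Fin.last ℓ) = F' Z := by
  rw [chainApply]
  rw [Finset.sum_eq_single (id : Fin (ℓ + 1) → Fin (ℓ + 1))]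
  · rw [if_pos ⟨rfl, rfl⟩]
    congr 1
    funext t
    have hcond : ((id (t.succ) : Fin (ℓ + 1)) : ℕ) = ((id (t.castSucc) : Fin (ℓ + 1)) : ℕ) + 1 := by
      simp
    rw [diagShift, dif_pos hcond]
    exact congrArg Z (Fin.ext (by simp))
  · intro c _ hc
    by_cases hall : ∀ t : Fin ℓ, ((c t.succ : ℕ)) = (c t.castSucc : ℕ) + 1
    · rw [if_neg]
      rintro ⟨h0, _⟩
      apply hc
      funext t
      have h1 := chain_val c hall t
      rw [h0] at h1
      simp only [Fin.val_zero, Nat.zero_add] at h1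
      exact Fin.ext h1
    · push_neg at hall
      obtain ⟨t, ht⟩ := hall
      split
      · exact F'.map_coord_zero t (dif_neg ht)
      · rfl
  · intro hmem
    exact absurd (Finset.mem_univ _) hmem

end Aux

/-- Uniqueness of nc power series expansions centered at `Y` on the
matrices nilpotent about `Y`: if two sequences of multilinear coefficients give the same
(finitely supported) sums on every `X` nilpotent about `Y`, they coincide. -/
theorem nc_power_series_coefficients_unique
    {R : Type*} [CommRing R] {M N : Type*} [AddCommGroup M] [Module R M]
    [AddCommGroup N] [Module R N] {s : ℕ} (hs : 0 < s) (Y : Matrix (Fin s) (Fin s) M)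
    (F G : ∀ ℓ : ℕ, MultilinearMap R (fun _ : Fin ℓ => Matrix (Fin s) (Fin s) M)
      (Matrix (Fin s) (Fin s) N))
    (h : ∀ (m : ℕ), 0 < m → ∀ X : Matrix (Fin (m * s)) (Fin (m * s)) M,
      NilpAbout R Y m X →
      ∑ᶠ ℓ : ℕ, sTerm Y m ℓ (F ℓ) X = ∑ᶠ ℓ : ℕ, sTerm Y m ℓ (G ℓ) X) :
    ∀ ℓ : ℕ, F ℓ = G ℓ := by
  intro ℓ
  apply MultilinearMap.ext
  intro Z
  have key := h (ℓ + 1) (Nat.succ_pos ℓ) (bigX Y Z) (nilp_bigX R Y Z)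
  have hsub : ∀ H : (∀ ℓ' : ℕ, MultilinearMap R
      (fun _ : Fin ℓ' => Matrix (Fin s) (Fin s) M) (Matrix (Fin s) (Fin s) N)),
      Function.support (fun ℓ' => sTerm Y (ℓ + 1) ℓ' (H ℓ') (bigX Y Z)) ⊆
        ↑(Finset.range (ℓ + 1)) := by
    intro H ℓ' hℓ'
    simp only [Finset.coe_range, Set.mem_Iio]
    by_contra hlt
    push_neg at hlt
    apply hℓ'
    simp only [Function.mem_support, ne_eq, not_not]
    ext a b
    simp only [sTerm, Matrix.of_apply, cBlk_bigX, Matrix.zero_apply,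
      chainApply_large hlt]
  rw [finsum_eq_finset_sum_of_support_subset _ (hsub F),
    finsum_eq_finset_sum_of_support_subset _ (hsub G)] at key
  have entry : ∀ (H : ∀ ℓ' : ℕ, MultilinearMap R
      (fun _ : Fin ℓ' => Matrix (Fin s) (Fin s) M) (Matrix (Fin s) (Fin s) N))
      (p q : Fin s),
      (∑ ℓ' ∈ Finset.range (ℓ + 1), sTerm Y (ℓ + 1) ℓ' (H ℓ') (bigX Y Z))
        (fromPair ((0 : Fin (ℓ + 1)), p)) (fromPair (Fin.last ℓ, q)) = H ℓ Z p q := by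
    intro H p q
    simp only [Matrix.sum_apply]
    rw [Finset.sum_eq_single ℓ]
    · simp only [sTerm, Matrix.of_apply, cBlk_bigX, toPair_fromPair, chainApply_eq]
    · intro ℓ' _ hne
      simp only [sTerm, Matrix.of_apply, cBlk_bigX, toPair_fromPair,
        chainApply_ne hne, Matrix.zero_apply]
    · intro hmem
      exact absurd (Finset.self_mem_range_succ ℓ) hmem
  ext p q
  have h1 := entry F p q
  have h2 := entry G p q
  rw [← h1, ← h2, key]
end
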